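/- arXiv:2109.14809 — 4 statements merged into one kernel-verified Lean document; each statement's English description precedes it below -/
import Mathlib

section
/- Let n ≥ 2, k ≥ 1 be integers and R ∈ (-1,1). Suppose ψ is a solution on an interval of the ODE ψ'(r) = (1/(k(1-r²)))·(ψ(r)²+1)·((n-1)(r-R)·ψ(r) + √(1-r²)), and suppose there exists r₀ ∈ (R,1) with ψ(r₀) > 0 and ψ defined on [r₀, r) for all r in its maximal interval of existence. Then for all r ∈ (r₀,1) in the domain, ψ'(r) > ((n-1)(r-R)/(k(1-r²)))·ψ(r)³. -/
/-!
At a zero of `ψ` the equation reduces to `ψ' = 1 / (k √(1 - r²)) > 0`, so `ψ` can never cross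
zero on `[r₀, b)` and stays nonnegative there. For `ψ ≥ 0` and `r > R`, the right-hand side
minus the cubic term is `((n-1)(r-R)ψ + √(1-r²)(ψ²+1)) / (k(1-r²)) > 0`.
-/

open Real Set Filter

/-- Right-hand side of the first-order soliton ODE:
`ψ\x27(r) = (1/(k(1-r²)))·(ψ(r)²+1)·((n-1)(r-R)·ψ(r) + √(1-r²))`. -/
noncomputable def solitonRHS (n k : ℕ) (R y r : ℝ) : ℝ :=
  (1 / ((k : ℝ) * (1 - r ^ 2))) * (y ^ 2 + 1) *
    (((n : ℝ) - 1) * (r - R) * y + Real.sqrt (1 - r ^ 2))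

theorem nonneg_of_hasDerivAt_pos_of_eq_zero {f f' : ℝ → ℝ} {a b : ℝ}
    (hf : ∀ x ∈ Ico a b, HasDerivAt f (f' x) x) (ha : 0 ≤ f a)
    (hzero : ∀ x ∈ Ico a b, f x = 0 → 0 < f' x) : ∀ x ∈ Ico a b, 0 ≤ f x := by
  intro x hx
  have hsub : Icc a x ⊆ Ico a b := Icc_subset_Ico_right hx.2
  refine image_le_of_deriv_right_lt_deriv_boundary' (f := fun _ => 0) (f' := fun _ => 0)
    continuousOn_const (fun y _ => hasDerivWithinAt_const _ _ _) ha
    (fun y hy => (hf y (hsub hy)).continuousAt.continuousWithinAt)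
    (fun y hy => (hf y (hsub (Ico_subset_Icc_self hy))).hasDerivWithinAt)
    (fun y hy hy0 => hzero y (hsub (Ico_subset_Icc_self hy)) hy0.symm) ⟨hx.1, le_rfl⟩

theorem solitonRHS_sub_cubic (n k : ℕ) (R y r : ℝ) :
    solitonRHS n k R y r - ((n : ℝ) - 1) * (r - R) / ((k : ℝ) * (1 - r ^ 2)) * y ^ 3 =
      (((n : ℝ) - 1) * (r - R) * y + √(1 - r ^ 2) * (y ^ 2 + 1)) / ((k : ℝ) * (1 - r ^ 2)) := by
  unfold solitonRHS
  ring

section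

variable {n k : ℕ} {R y r : ℝ}

theorem cubic_lt_solitonRHS (hn : 1 ≤ n) (hk : 1 ≤ k) (hRr : R ≤ r) (hr : r ∈ Ioo (-1 : ℝ) 1)
    (hy : 0 ≤ y) :
    ((n : ℝ) - 1) * (r - R) / ((k : ℝ) * (1 - r ^ 2)) * y ^ 3 < solitonRHS n k R y r := by
  have hn' : (0 : ℝ) ≤ (n : ℝ) - 1 := by
    rw [sub_nonneg]
    exact_mod_cast hn
  have hk' : (0 : ℝ) < k := by exact_mod_cast hk
  have hr2 : 0 < 1 - r ^ 2 := by nlinarith [hr.1, hr.2]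
  have hsqrt : 0 < √(1 - r ^ 2) := sqrt_pos.mpr hr2
  rw [← sub_pos, solitonRHS_sub_cubic]
  have hlin : 0 ≤ ((n : ℝ) - 1) * (r - R) * y := by
    have : 0 ≤ r - R := sub_nonneg.mpr hRr
    positivity
  positivity

theorem solitonRHS_pos (hn : 1 ≤ n) (hk : 1 ≤ k) (hRr : R ≤ r) (hr : r ∈ Ioo (-1 : ℝ) 1)
    (hy : 0 ≤ y) : 0 < solitonRHS n k R y r := by
  refine lt_of_le_of_lt ?_ (cubic_lt_solitonRHS hn hk hRr hr hy)
  have hr2 : 0 < 1 - r ^ 2 := by nlinarith [hr.1, hr.2]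
  have : 0 ≤ ((n : ℝ) - 1) * (r - R) := mul_nonneg
    (sub_nonneg.mpr (by exact_mod_cast hn)) (sub_nonneg.mpr hRr)
  positivity

end

theorem stmt_2 (n k : ℕ) (hn : 2 ≤ n) (hk : 1 ≤ k) (R r₀ b : ℝ)
    (hR : R ∈ Set.Ioo (-1 : ℝ) 1) (hr₀ : r₀ ∈ Set.Ioo R 1) (hb : b ≤ 1)
    (ψ : ℝ → ℝ) (hψ : ∀ r ∈ Set.Ico r₀ b, HasDerivAt ψ (solitonRHS n k R (ψ r) r) r)
    (hpos : 0 < ψ r₀) :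
    ∀ r ∈ Set.Ioo r₀ b,
      (((n : ℝ) - 1) * (r - R) / ((k : ℝ) * (1 - r ^ 2))) * ψ r ^ 3 < deriv ψ r := by
  have hn1 : 1 ≤ n := by omega
  have hdomain : ∀ r ∈ Ico r₀ b, R ≤ r ∧ r ∈ Ioo (-1 : ℝ) 1 := fun r hr =>
    ⟨by linarith [hr₀.1, hr.1], by linarith [hR.1, hr₀.1, hr.1], by linarith [hr.2]⟩
  have hψ_nonneg : ∀ r ∈ Ico r₀ b, 0 ≤ ψ r :=
    nonneg_of_hasDerivAt_pos_of_eq_zero hψ hpos.le fun r hr hψr => by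
      obtain ⟨hRr, hr1⟩ := hdomain r hr
      exact solitonRHS_pos hn1 hk hRr hr1 hψr.ge
  intro r hr
  have hr' : r ∈ Ico r₀ b := Ioo_subset_Ico_self hr
  obtain ⟨hRr, hr1⟩ := hdomain r hr'
  rw [(hψ r hr').deriv]
  exact cubic_lt_solitonRHS hn1 hk hRr hr1 (hψ_nonneg r hr')
end

section
/- Let n ≥ 2 and k = 1, R = 0. Suppose ψ solves ψ'(r) = (1/(1-r²))·(ψ(r)²+1)·((n-1)r·ψ(r) + √(1-r²)) on (r₀, 0) with r₀ ∈ (-1,0), and 0 < ψ(r) < -√(1-r²)/((n-1)r) for all r ∈ (r₀,0). Then ψ'(r)/(ψ(r)²+1) < 1/√(1-r²) for all r ∈ (r₀,0), and consequently arctan(ψ(r)) < arcsin(r) - arcsin(r₀) + arctan(ψ(r₀)) for all r ∈ (r₀,0). -/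
open Real Set Filter

/-! Dividing the ODE by `ψ² + 1` gives `(arctan ψ)' = ((n-1) r ψ + √(1-r²)) / (1-r²)`, which is
below `1/√(1-r²) = arcsin'` because `(n-1) r ψ < 0` for `r < 0 < ψ`. Hence `arctan ψ - arcsin` is
strictly decreasing on `[r₀, 0)`. -/

theorem sub_lt_sub_of_hasDerivAt_lt {f g f' g' : ℝ → ℝ} {a b : ℝ}
    (hf : ∀ x ∈ Ico a b, HasDerivAt f (f' x) x) (hg : ∀ x ∈ Ico a b, HasDerivAt g (g' x) x)
    (hlt : ∀ x ∈ Ioo a b, f' x < g' x) :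
    ∀ x ∈ Ioo a b, f x - f a < g x - g a := by
  have hderiv : ∀ x ∈ Ico a b, HasDerivAt (g - f) (g' x - f' x) x :=
    fun x hx => (hg x hx).sub (hf x hx)
  have hmono : StrictMonoOn (g - f) (Ico a b) := by
    refine strictMonoOn_of_deriv_pos (convex_Ico a b)
      (fun x hx => (hderiv x hx).continuousAt.continuousWithinAt) fun x hx => ?_
    rw [interior_Ico] at hx
    rw [(hderiv x (Ioo_subset_Ico_self hx)).deriv, sub_pos]
    exact hlt x hx
  intro x hx
  have := hmono (left_mem_Ico.2 (hx.1.trans hx.2)) (Ioo_subset_Ico_self hx) hx.1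
  simp only [Pi.sub_apply] at this
  linarith

theorem solitonRHS_one_zero_div (n : ℕ) (y r : ℝ) :
    solitonRHS n 1 0 y r / (y ^ 2 + 1) = (((n : ℝ) - 1) * r * y + √(1 - r ^ 2)) / (1 - r ^ 2) := by
  unfold solitonRHS
  field_simp
  ring

theorem add_sqrt_div_lt_inv_sqrt {x r : ℝ} (hx : x < 0) (hr : r ^ 2 < 1) :
    (x + √(1 - r ^ 2)) / (1 - r ^ 2) < 1 / √(1 - r ^ 2) := by
  have hpos : 0 < 1 - r ^ 2 := by linarith
  have hs : 0 < √(1 - r ^ 2) := sqrt_pos.2 hpos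
  rw [div_lt_div_iff₀ hpos hs]
  nlinarith [sq_sqrt hpos.le]

theorem stmt_5 (n : ℕ) (hn : 2 ≤ n) (r₀ : ℝ) (hr₀ : r₀ ∈ Set.Ioo (-1 : ℝ) 0)
    (ψ : ℝ → ℝ) (hψ : ∀ r ∈ Set.Ico r₀ 0, HasDerivAt ψ (solitonRHS n 1 0 (ψ r) r) r)
    (hbound : ∀ r ∈ Set.Ioo r₀ 0,
      0 < ψ r ∧ ψ r < -Real.sqrt (1 - r ^ 2) / (((n : ℝ) - 1) * r)) :
    ∀ r ∈ Set.Ioo r₀ 0,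
      deriv ψ r / (ψ r ^ 2 + 1) < 1 / Real.sqrt (1 - r ^ 2) ∧
      Real.arctan (ψ r) < Real.arcsin r - Real.arcsin r₀ + Real.arctan (ψ r₀) := by
  have hn1 : (0 : ℝ) < n - 1 := by
    have : (2 : ℝ) ≤ n := by exact_mod_cast hn
    linarith
  have hsq : ∀ r ∈ Ico r₀ 0, r ^ 2 < 1 := fun r hr => by nlinarith [hr₀.1, hr.1, hr.2]
  have key : ∀ r ∈ Ioo r₀ 0, solitonRHS n 1 0 (ψ r) r / (ψ r ^ 2 + 1) < 1 / √(1 - r ^ 2) :=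
    fun r hr => by
      rw [solitonRHS_one_zero_div]
      exact add_sqrt_div_lt_inv_sqrt
        (mul_neg_of_neg_of_pos (mul_neg_of_pos_of_neg hn1 hr.2) (hbound r hr).1)
        (hsq r (Ioo_subset_Ico_self hr))
  have harctan : ∀ r ∈ Ico r₀ 0,
      HasDerivAt (fun x => arctan (ψ x)) (solitonRHS n 1 0 (ψ r) r / (ψ r ^ 2 + 1)) r :=
    fun r hr => by
      convert (hψ r hr).arctan using 1
      rw [add_comm, div_eq_inv_mul, one_div]
  have harcsin : ∀ r ∈ Ico r₀ 0, HasDerivAt arcsin (1 / √(1 - r ^ 2)) r := fun r hr =>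
    hasDerivAt_arcsin (by nlinarith [hsq r hr]) (by nlinarith [hsq r hr])
  intro r hr
  refine ⟨(hψ r (Ioo_subset_Ico_self hr)).deriv ▸ key r hr, ?_⟩
  have := sub_lt_sub_of_hasDerivAt_lt harctan harcsin key r hr
  linarith
end

section
/- Let n ≥ 2, k ≥ 1, R ∈ (-1,1), and let ψ be a maximal solution of ψ'(r) = (1/(k(1-r²)))·(ψ(r)²+1)·((n-1)(r-R)·ψ(r) + √(1-r²)) on a subinterval of (-1,1). If there exists r₀ ∈ (-1,R) with ψ(r₀) > -√(1-r₀²)/((n-1)(r₀-R)), then there exists r₁ ∈ (-1,r₀) such that ψ(r) → +∞ as r ↓ r₁. -/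
/-!
Write `η(r) = -√(1 - r²) / ((n - 1)(r - R))` for the nullcline. On `(-1, R)` it is increasing,
and the right-hand side factors as `(ψ² + 1)/(k(1 - r²)) · (n - 1)(R - r) · (η(r) - ψ)`. Hence if
`c = ψ(r₀) > η(r₀)`, the level `c` is a barrier to the left of `r₀`: there `ψ ≥ c`,
`ψ' ≤ -δ (ψ² + 1) / (k(1 - r²))` with `δ = (n - 1)(R - r₀)(c - η(r₀)) > 0`, and `ψ` decreases.
Then `(1/ψ)' ≥ δ / (2k(1 + r))`, so `1/ψ - δ/(2k) · log(1 + r)` increases; since `1/ψ > 0`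
and `log(1 + r) → -∞` at `-1`, the left end `a` of the maximal interval lies strictly above `-1`.
If `ψ` were bounded on `(a, r₀]`, its graph would stay in a compact part of the strip where the
equation is smooth, and Picard–Lindelöf would continue `ψ` past `a`, against maximality. So `ψ`
is unbounded, and being monotone it tends to `+∞` as `r ↓ a`.
-/

open Real Set Filter

open Topology NNReal Function

section Extension

variable {f : ℝ → ℝ → ℝ}

theorem exists_eq_forall_mem_Icc_hasDerivWithinAt_and_mem_Icc {tmin t₀ tmax lo hi x₀ : ℝ}
    {C K : ℝ≥0} (ht₀ : t₀ ∈ Icc tmin tmax)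
    (hcont : ∀ x ∈ Icc lo hi, ContinuousOn (f · x) (Icc tmin tmax))
    (hlip : ∀ t ∈ Icc tmin tmax, LipschitzOnWith K (f t) (Icc lo hi))
    (hbound : ∀ t ∈ Icc tmin tmax, ∀ x ∈ Icc lo hi, |f t x| ≤ C)
    (hx₀ : x₀ ∈ Icc (lo + C * (tmax - tmin)) (hi - C * (tmax - tmin))) :
    ∃ φ : ℝ → ℝ, φ t₀ = x₀ ∧ ∀ t ∈ Icc tmin tmax,
      HasDerivWithinAt φ (f t (φ t)) (Icc tmin tmax) t ∧ φ t ∈ Icc lo hi := by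
  have hlohi : lo ≤ hi := by nlinarith [hx₀.1, hx₀.2, ht₀.1.trans ht₀.2]
  -- Clamping the state makes the field globally bounded and Lipschitz, so Picard–Lindelöf
  -- applies; the bound `C` then keeps the solution in `[lo, hi]`, where the clamp is invisible.
  set clamp : ℝ → ℝ := fun x => max lo (min hi x)
  have hclamp_mem (x : ℝ) : clamp x ∈ Icc lo hi := ⟨le_max_left _ _, max_le hlohi (min_le_left _ _)⟩
  have hclamp_eq {x : ℝ} (hx : x ∈ Icc lo hi) : clamp x = x := by
    simp only [clamp, min_eq_right hx.2, max_eq_right hx.1]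
  have hclamp_lip : LipschitzWith 1 clamp := (LipschitzWith.id.const_min hi).const_max lo
  set g : ℝ → ℝ → ℝ := fun t x => f t (clamp x)
  have hg : IsPicardLindelof g ⟨t₀, ht₀⟩ x₀ (C * (tmax - tmin).toNNReal) 0 C K :=
    { lipschitzOnWith := fun t ht => by
        have h : LipschitzOnWith (K * 1) (g t) univ :=
          (hlip t ht).comp hclamp_lip.lipschitzOnWith fun x _ => hclamp_mem x
        exact (mul_one K ▸ h).mono (subset_univ _)
      continuousOn := fun x _ => hcont _ (hclamp_mem x)
      norm_le := fun t ht x _ => hbound t ht _ (hclamp_mem x)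
      mul_max_le := by
        simp only [NNReal.coe_mul, Real.coe_toNNReal _ (sub_nonneg.2 (ht₀.1.trans ht₀.2)),
          NNReal.coe_zero, sub_zero]
        gcongr
        exact max_le (by linarith [ht₀.1]) (by linarith [ht₀.2]) }
  obtain ⟨φ, hφt₀, hφ⟩ := hg.exists_eq_forall_mem_Icc_hasDerivWithinAt₀
  have hφmem : ∀ t ∈ Icc tmin tmax, φ t ∈ Icc lo hi := by
    intro t ht
    have hdist := (convex_Icc tmin tmax).norm_image_sub_le_of_norm_hasDerivWithin_le hφ
      (fun s hs => hbound s hs _ (hclamp_mem _)) ht₀ ht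
    rw [hφt₀, Real.norm_eq_abs, Real.norm_eq_abs] at hdist
    have htt₀ : |t - t₀| ≤ tmax - tmin :=
      abs_le.2 ⟨by linarith [ht.1, ht₀.2], by linarith [ht.2, ht₀.1]⟩
    have := hdist.trans (mul_le_mul_of_nonneg_left htt₀ C.2)
    constructor <;> linarith [abs_le.1 this, hx₀.1, hx₀.2]
  refine ⟨φ, hφt₀, fun t ht => ⟨?_, hφmem t ht⟩⟩
  simpa [g, hclamp_eq (hφmem t ht)] using hφ t ht

theorem exists_eqOn_hasDerivAt_of_eqOn_overlap {φ ψ : ℝ → ℝ} {a' a c b : ℝ} (hac : a < c)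
    (hφ : ∀ t ∈ Ioo a' c, HasDerivAt φ (f t (φ t)) t)
    (hψ : ∀ t ∈ Ioo a b, HasDerivAt ψ (f t (ψ t)) t) (heq : EqOn φ ψ (Ioo a c)) :
    ∃ χ : ℝ → ℝ, EqOn χ ψ (Ioo a b) ∧ ∀ t ∈ Ioo a' b, HasDerivAt χ (f t (χ t)) t := by
  refine ⟨fun t => if t ≤ a then φ t else ψ t, fun t ht => if_neg (not_le.2 ht.1),
    fun t ht => ?_⟩
  rcases lt_or_ge t c with htc | htc
  · have hχφ : (fun t => if t ≤ a then φ t else ψ t) =ᶠ[𝓝 t] φ := by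
      filter_upwards [Iio_mem_nhds htc] with s hs
      by_cases hsa : s ≤ a
      · exact if_pos hsa
      · exact (if_neg hsa).trans (heq ⟨not_le.1 hsa, hs⟩).symm
    have := (hφ t ⟨ht.1, htc⟩).congr_of_eventuallyEq hχφ
    rwa [← hχφ.eq_of_nhds] at this
  · have hχψ : (fun t => if t ≤ a then φ t else ψ t) =ᶠ[𝓝 t] ψ := by
      filter_upwards [Ioi_mem_nhds (hac.trans_le htc)] with s hs
      exact if_neg (not_le.2 hs)
    have := (hψ t ⟨hac.trans_le htc, ht.2⟩).congr_of_eventuallyEq hχψ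
    rwa [← hχψ.eq_of_nhds] at this

theorem eqOn_Ioc_of_hasDerivWithinAt_Icc {φ ψ : ℝ → ℝ} {tmin a t₀ lo hi : ℝ} {K : ℝ≥0}
    (hta : tmin ≤ a) (hlip : ∀ t ∈ Icc tmin t₀, LipschitzOnWith K (f t) (Icc lo hi))
    (hφ : ∀ t ∈ Icc tmin t₀, HasDerivWithinAt φ (f t (φ t)) (Icc tmin t₀) t ∧ φ t ∈ Icc lo hi)
    (hψ : ∀ t ∈ Ioc a t₀, HasDerivAt ψ (f t (ψ t)) t ∧ ψ t ∈ Icc lo hi) (h : φ t₀ = ψ t₀) :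
    EqOn φ ψ (Ioc a t₀) := fun t ht => by
  have hsub : Icc t t₀ ⊆ Icc tmin t₀ := Icc_subset_Icc (hta.trans ht.1.le) le_rfl
  have hsub' : Icc t t₀ ⊆ Ioc a t₀ := Icc_subset_Ioc ht.1 le_rfl
  refine ODE_solution_unique_of_mem_Icc_left (v := f) (s := fun _ => Icc lo hi)
    (fun s hs => hlip s (hsub (Ioc_subset_Icc_self hs)))
    (fun s hs => (hφ s (hsub hs)).1.continuousWithinAt.mono hsub)
    (fun s hs => ((hφ s (hsub (Ioc_subset_Icc_self hs))).1.mono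
      (Icc_subset_Icc_right hs.2)).mono_of_mem_nhdsWithin
        (Icc_mem_nhdsLE_of_mem ⟨(hta.trans_lt ht.1).trans hs.1, le_rfl⟩))
    (fun s hs => (hφ s (hsub (Ioc_subset_Icc_self hs))).2)
    (fun s hs => (hψ s (hsub' hs)).1.continuousAt.continuousWithinAt)
    (fun s hs => (hψ s (hsub' (Ioc_subset_Icc_self hs))).1.hasDerivWithinAt)
    (fun s hs => (hψ s (hsub' (Ioc_subset_Icc_self hs))).2) h ⟨le_rfl, ht.2⟩

theorem exists_extension_left {ψ : ℝ → ℝ} {a b w t₁ lo hi : ℝ} {K : ℝ≥0}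
    (hw : w < a) (ht₁ : t₁ ∈ Ioo a b)
    (hf : ContinuousOn (uncurry f) (Icc w t₁ ×ˢ Icc (lo - 1) (hi + 1)))
    (hlip : ∀ t ∈ Icc w t₁, LipschitzOnWith K (f t) (Icc (lo - 1) (hi + 1)))
    (hψ : ∀ t ∈ Ioo a b, HasDerivAt ψ (f t (ψ t)) t)
    (hψmem : ∀ t ∈ Ioc a t₁, ψ t ∈ Icc lo hi) :
    ∃ a' ∈ Ioo w a, ∃ φ : ℝ → ℝ, EqOn φ ψ (Ioo a b) ∧
      ∀ t ∈ Ioo a' b, HasDerivAt φ (f t (φ t)) t := by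
  obtain ⟨C₀, hC₀⟩ := (isCompact_Icc.prod isCompact_Icc).exists_bound_of_continuousOn hf
  set C : ℝ≥0 := C₀.toNNReal
  -- solving backwards from `t₀` for a time `h` moves the solution by at most `C * h ≤ 1`
  set h : ℝ := min (1 / (C + 1)) (a - w)
  have hh : 0 < h := lt_min (by positivity) (by linarith)
  have hCh : C * h ≤ 1 := by
    calc C * h ≤ C * (1 / (C + 1)) := by gcongr; exact min_le_left _ _
      _ ≤ 1 := by rw [mul_one_div, div_le_one (by positivity)]; linarith
  set t₀ := min t₁ (a + h / 2)
  have hat₀ : a < t₀ := lt_min ht₁.1 (by linarith)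
  have ht₀t₁ : t₀ ≤ t₁ := min_le_left _ _
  have hwt : w < t₀ - h := by linarith [min_le_right (1 / (C + 1 : ℝ)) (a - w)]
  have hta : t₀ - h < a := by linarith [min_le_right t₁ (a + h / 2)]
  have hrect : Icc (t₀ - h) t₀ ⊆ Icc w t₁ := Icc_subset_Icc hwt.le ht₀t₁
  have hψt₀ := hψmem t₀ ⟨hat₀, ht₀t₁⟩
  obtain ⟨φ, hφt₀, hφ⟩ := exists_eq_forall_mem_Icc_hasDerivWithinAt_and_mem_Icc (f := f)
    (x₀ := ψ t₀) (right_mem_Icc.2 (sub_le_self t₀ hh.le))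
    (fun x hx => hf.comp (continuous_id.prodMk continuous_const).continuousOn
      fun t ht => ⟨hrect ht, hx⟩)
    (fun t ht => hlip t (hrect ht))
    (fun t ht x hx => (Real.norm_eq_abs _ ▸ hC₀ (t, x) ⟨hrect ht, hx⟩).trans
      (Real.le_coe_toNNReal C₀))
    (by rw [sub_sub_cancel]; constructor <;> linarith [hψt₀.1, hψt₀.2])
  have hψ' : ∀ t ∈ Ioc a t₀, HasDerivAt ψ (f t (ψ t)) t ∧ ψ t ∈ Icc (lo - 1) (hi + 1) :=
    fun t ht => ⟨hψ t ⟨ht.1, ht.2.trans_lt (ht₀t₁.trans_lt ht₁.2)⟩,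
      Icc_subset_Icc (by linarith) (by linarith) (hψmem t ⟨ht.1, ht.2.trans ht₀t₁⟩)⟩
  have hφψ := eqOn_Ioc_of_hasDerivWithinAt_Icc hta.le (fun t ht => hlip t (hrect ht)) hφ hψ' hφt₀
  obtain ⟨χ, hχψ, hχ⟩ := exists_eqOn_hasDerivAt_of_eqOn_overlap hat₀
    (fun t ht => (hφ t (Ioo_subset_Icc_self ht)).1.hasDerivAt (Icc_mem_nhds ht.1 ht.2)) hψ
    (hφψ.mono Ioo_subset_Ioc_self)
  exact ⟨t₀ - h, ⟨hwt, hta⟩, χ, hχψ, hχ⟩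

end Extension

theorem le_of_hasDerivAt_neg_of_eq {g g' : ℝ → ℝ} {u v c : ℝ}
    (hg : ∀ t ∈ Icc u v, HasDerivAt g (g' t) t) (hv : c ≤ g v)
    (hneg : ∀ t ∈ Ioc u v, g t = c → g' t < 0) : ∀ t ∈ Icc u v, c ≤ g t := by
  -- reflect time: `x ↦ -g (-x)` stays below `-c` going forward from `-v`
  have hrefl : ∀ x ∈ Icc (-v) (-u), HasDerivAt (fun x => -g (-x)) (g' (-x)) x := fun x hx => by
    have h := ((hg (-x) ⟨by linarith [hx.2], by linarith [hx.1]⟩).comp x (hasDerivAt_neg x)).neg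
    rwa [mul_neg_one, neg_neg] at h
  have key := image_le_of_deriv_right_lt_deriv_boundary' (f := fun x => -g (-x)) (B := fun _ => -c)
    (B' := fun _ => 0) (fun x hx => (hrefl x hx).continuousAt.continuousWithinAt)
    (fun x hx => (hrefl x (Ico_subset_Icc_self hx)).hasDerivWithinAt)
    (by simpa using hv) continuousOn_const (fun _ _ => hasDerivWithinAt_const _ _ _)
    (fun x hx hx' => hneg (-x) ⟨by linarith [hx.2], by linarith [hx.1]⟩ (by linarith [hx']))
  intro t ht
  simpa using key ⟨neg_le_neg ht.2, neg_le_neg ht.1⟩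

theorem neg_one_lt_of_hasDerivAt_ge_div_one_add {G G' : ℝ → ℝ} {a r₀ m : ℝ} (hm : 0 < m)
    (har₀ : a < r₀) (ha : -1 ≤ a) (hG : ∀ x ∈ Ioc a r₀, HasDerivAt G (G' x) x)
    (hG' : ∀ x ∈ Ioc a r₀, m / (1 + x) ≤ G' x) (hpos : ∀ x ∈ Ioc a r₀, 0 < G x) : -1 < a := by
  have hx1 : ∀ x ∈ Ioc a r₀, 0 < 1 + x := fun x hx => by linarith [hx.1]
  have hH : ∀ x ∈ Ioc a r₀,
      HasDerivAt (fun t => G t - m * log (1 + t)) (G' x - m * (1 / (1 + x))) x := fun x hx =>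
    (hG x hx).sub ((((hasDerivAt_id x).const_add 1).log (hx1 x hx).ne').const_mul m)
  -- `G - m log (1 + ·)` is monotone, so `G > 0` forces `log (1 + x)` to stay bounded below
  have hbound : ∀ x ∈ Ioc a r₀, log (1 + r₀) - G r₀ / m < log (1 + x) := fun x hx => by
    have hmono : MonotoneOn (fun t => G t - m * log (1 + t)) (Icc x r₀) := by
      have hsub : Icc x r₀ ⊆ Ioc a r₀ := Icc_subset_Ioc hx.1 le_rfl
      refine monotoneOn_of_hasDerivWithinAt_nonneg (convex_Icc x r₀)
        (fun t ht => (hH t (hsub ht)).continuousAt.continuousWithinAt)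
        (fun t ht => (hH t (hsub (interior_subset ht))).hasDerivWithinAt) fun t ht => ?_
      rw [mul_one_div, sub_nonneg]
      exact hG' t (hsub (interior_subset ht))
    have := hmono (left_mem_Icc.2 hx.2) (right_mem_Icc.2 hx.2) hx.2
    rw [sub_lt_comm, lt_div_iff₀ hm]
    linarith [hpos x hx]
  by_contra! h
  set ε := exp (log (1 + r₀) - G r₀ / m)
  have hε : 0 < ε := exp_pos _
  set x := min r₀ (ε / 2 - 1)
  have hx : x ∈ Ioc a r₀ := ⟨lt_min har₀ (by linarith), min_le_left _ _⟩
  have := exp_lt_exp.2 (hbound x hx)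
  rw [exp_log (hx1 x hx)] at this
  linarith [min_le_right r₀ (ε / 2 - 1)]

theorem AntitoneOn.tendsto_nhdsGT_atTop {α β : Type*} [LinearOrder α] [TopologicalSpace α]
    [OrderTopology α] [LinearOrder β] {f : α → β} {a b : α} (hf : AntitoneOn f (Ioc a b))
    (hbdd : ¬BddAbove (f '' Ioc a b)) : Tendsto f (𝓝[>] a) atTop := by
  rw [tendsto_atTop]
  intro M
  obtain ⟨_, ⟨s, hs, rfl⟩, hMs⟩ := not_bddAbove_iff'.1 hbdd M
  filter_upwards [Ioc_mem_nhdsGT hs.1] with t ht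
  exact (le_of_not_ge hMs).trans (hf ⟨ht.1, ht.2.trans hs.2⟩ hs ht.2)

theorem natCast_mul_one_sub_sq_pos {k : ℕ} (hk : 0 < k) {t : ℝ} (ht : t ∈ Ioo (-1) 1) :
    (0 : ℝ) < k * (1 - t ^ 2) :=
  mul_pos (by exact_mod_cast hk) (by nlinarith [ht.1, ht.2])

section Soliton

variable {n k : ℕ} {R : ℝ}

theorem contDiffOn_solitonRHS {m : WithTop ℕ∞} (hk : 0 < k) :
    ContDiffOn ℝ m (fun p : ℝ × ℝ => solitonRHS n k R p.2 p.1) (Ioo (-1) 1 ×ˢ univ) := by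
  unfold solitonRHS
  refine ((contDiffOn_const.div (by fun_prop) fun p hp => ?_).mul (by fun_prop)).mul
    ((by fun_prop : ContDiffOn ℝ m _ _).add ((by fun_prop : ContDiffOn ℝ m _ _).sqrt
      fun p hp => ?_))
  · exact (natCast_mul_one_sub_sq_pos hk hp.1).ne'
  · exact (pos_of_mul_pos_right (natCast_mul_one_sub_sq_pos hk hp.1) (Nat.cast_nonneg k)).ne'

theorem exists_lipschitzOnWith_solitonRHS (hk : 0 < k) {w t₁ : ℝ} (hw : -1 < w) (ht₁ : t₁ < 1)
    (lo hi : ℝ) : ∃ K, ∀ t ∈ Icc w t₁, LipschitzOnWith K (solitonRHS n k R · t) (Icc lo hi) := by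
  obtain ⟨K, hK⟩ := ((contDiffOn_solitonRHS (n := n) (R := R) (m := 1) hk).mono
    (prod_mono (Icc_subset_Ioo hw ht₁) (subset_univ (Icc lo hi)))).exists_lipschitzOnWith
    one_ne_zero ((convex_Icc w t₁).prod (convex_Icc lo hi)) (isCompact_Icc.prod isCompact_Icc)
  refine ⟨K, fun t ht => ?_⟩
  have h := hK.comp (LipschitzWith.prodMk_left t).lipschitzOnWith fun y hy => ⟨ht, hy⟩
  rwa [mul_one] at h

variable (n R) in
noncomputable def solitonNullcline (r : ℝ) : ℝ := -√(1 - r ^ 2) / (((n : ℝ) - 1) * (r - R))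

theorem solitonNullcline_eq (r : ℝ) :
    solitonNullcline n R r = √(1 - r ^ 2) / (((n : ℝ) - 1) * (R - r)) := by
  rw [solitonNullcline, ← neg_sub R r, mul_neg, neg_div_neg_eq]

theorem solitonNullcline_nonneg (hn : 2 ≤ n) {r : ℝ} (hr : r < R) : 0 ≤ solitonNullcline n R r := by
  rw [solitonNullcline_eq]
  exact div_nonneg (sqrt_nonneg _) (mul_pos (sub_pos.2 (Nat.one_lt_cast.2 hn)) (sub_pos.2 hr)).le

theorem sqrt_one_sub_sq_mul_sub_le {r r' : ℝ} (hr : -1 < r) (hrr' : r ≤ r') (hr'R : r' < R)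
    (hR : R ≤ 1) : √(1 - r ^ 2) * (R - r') ≤ √(1 - r' ^ 2) * (R - r) := by
  have h1 : 0 ≤ 1 - r ^ 2 := by nlinarith
  have h1' : 0 ≤ 1 - r' ^ 2 := by nlinarith
  rw [← Real.sqrt_sq (by linarith : 0 ≤ R - r'), ← Real.sqrt_sq (by linarith : 0 ≤ R - r),
    ← Real.sqrt_mul h1, ← Real.sqrt_mul h1']
  apply Real.sqrt_le_sqrt
  have key : (1 - r' ^ 2) * (R - r) ^ 2 - (1 - r ^ 2) * (R - r') ^ 2 =
      (r' - r) * ((R - r) * (1 - R * r') + (R - r') * (1 - R * r)) := by ring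
  have h2 : 0 ≤ 1 - R * r' := by nlinarith
  have h3 : 0 ≤ 1 - R * r := by nlinarith
  linarith [mul_nonneg (sub_nonneg.2 hrr') (add_nonneg (mul_nonneg (by linarith : 0 ≤ R - r) h2)
    (mul_nonneg (by linarith : 0 ≤ R - r') h3))]

theorem monotoneOn_solitonNullcline (hn : 2 ≤ n) (hR : R ≤ 1) :
    MonotoneOn (solitonNullcline n R) (Ioo (-1) R) := by
  intro r hr r' hr' hrr'
  have hN : (0 : ℝ) < (n : ℝ) - 1 := sub_pos.2 (Nat.one_lt_cast.2 hn)
  rw [solitonNullcline_eq, solitonNullcline_eq,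
    div_le_div_iff₀ (mul_pos hN (sub_pos.2 hr.2)) (mul_pos hN (sub_pos.2 hr'.2))]
  nlinarith [mul_le_mul_of_nonneg_left (sqrt_one_sub_sq_mul_sub_le hr.1 hrr' hr'.2 hR) hN.le]

theorem solitonRHS_eq (hn : 2 ≤ n) {r : ℝ} (hr : r ≠ R) (y : ℝ) :
    solitonRHS n k R y r = (y ^ 2 + 1) / (k * (1 - r ^ 2)) *
      (((n : ℝ) - 1) * (R - r) * (solitonNullcline n R r - y)) := by
  have hN : (n : ℝ) - 1 ≠ 0 := (sub_pos.2 (Nat.one_lt_cast.2 hn)).ne'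
  have hrR : r - R ≠ 0 := sub_ne_zero.2 hr
  rw [solitonRHS, solitonNullcline]
  field_simp
  ring

theorem solitonRHS_le (hn : 2 ≤ n) (hk : 0 < k) (hR : R ≤ 1) {r₀ r c y : ℝ}
    (hr₀ : r₀ < R) (hr : r ∈ Ioc (-1) r₀) (hc : solitonNullcline n R r₀ ≤ c) (hy : c ≤ y) :
    solitonRHS n k R y r ≤
      (y ^ 2 + 1) / (k * (1 - r ^ 2)) *
        -(((n : ℝ) - 1) * (R - r₀) * (c - solitonNullcline n R r₀)) := by
  have hN : (0 : ℝ) < (n : ℝ) - 1 := sub_pos.2 (Nat.one_lt_cast.2 hn)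
  have hrR : r < R := hr.2.trans_lt hr₀
  have hη : solitonNullcline n R r ≤ solitonNullcline n R r₀ :=
    monotoneOn_solitonNullcline hn hR ⟨hr.1, hrR⟩ ⟨hr.1.trans_le hr.2, hr₀⟩ hr.2
  have hbracket : ((n : ℝ) - 1) * (R - r) * (solitonNullcline n R r - y) ≤
      -(((n : ℝ) - 1) * (R - r₀) * (c - solitonNullcline n R r₀)) := by
    have h1 : solitonNullcline n R r - y ≤ -(c - solitonNullcline n R r₀) := by linarith
    have h2 : ((n : ℝ) - 1) * (R - r₀) ≤ ((n : ℝ) - 1) * (R - r) := by nlinarith [hr.2]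
    nlinarith [mul_le_mul_of_nonneg_left h1 (mul_pos hN (sub_pos.2 hrR)).le,
      mul_le_mul_of_nonneg_right h2 (sub_nonneg.2 hc)]
  rw [solitonRHS_eq hn hrR.ne]
  exact mul_le_mul_of_nonneg_left hbracket
    (div_nonneg (by positivity) (natCast_mul_one_sub_sq_pos hk ⟨hr.1, by linarith⟩).le)

theorem solitonRHS_neg (hn : 2 ≤ n) (hk : 0 < k) (hR : R ≤ 1) {r₀ r c y : ℝ}
    (hr₀ : r₀ < R) (hr : r ∈ Ioc (-1) r₀) (hc : solitonNullcline n R r₀ < c) (hy : c ≤ y) :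
    solitonRHS n k R y r < 0 :=
  (solitonRHS_le hn hk hR hr₀ hr hc.le hy).trans_lt <| mul_neg_of_pos_of_neg
    (div_pos (by positivity) (natCast_mul_one_sub_sq_pos hk ⟨hr.1, by linarith [hr.2]⟩))
    (neg_neg_of_pos (mul_pos (mul_pos (sub_pos.2 (Nat.one_lt_cast.2 hn)) (sub_pos.2 hr₀))
      (sub_pos.2 hc)))

end Soliton

section Solution

variable {n k : ℕ} {R a r₀ : ℝ} {ψ : ℝ → ℝ}

theorem le_apply_of_hasDerivAt_solitonRHS (hn : 2 ≤ n) (hk : 0 < k) (hR : R ≤ 1) (ha : -1 ≤ a)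
    (hr₀ : r₀ < R) (hψ : ∀ r ∈ Ioc a r₀, HasDerivAt ψ (solitonRHS n k R (ψ r) r) r)
    (hpos : solitonNullcline n R r₀ < ψ r₀) : ∀ r ∈ Ioc a r₀, ψ r₀ ≤ ψ r := by
  intro r hr
  refine le_of_hasDerivAt_neg_of_eq (fun t ht => hψ t ⟨hr.1.trans_le ht.1, ht.2⟩) le_rfl
    (fun t ht hψt => ?_) r ⟨le_rfl, hr.2⟩
  exact solitonRHS_neg hn hk hR hr₀ ⟨ha.trans_lt (hr.1.trans ht.1), ht.2⟩ hpos hψt.ge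

theorem antitoneOn_of_hasDerivAt_solitonRHS (hn : 2 ≤ n) (hk : 0 < k) (hR : R ≤ 1)
    (ha : -1 ≤ a) (hr₀ : r₀ < R) (hψ : ∀ r ∈ Ioc a r₀, HasDerivAt ψ (solitonRHS n k R (ψ r) r) r)
    (hpos : solitonNullcline n R r₀ < ψ r₀) : AntitoneOn ψ (Ioc a r₀) := by
  have hge := le_apply_of_hasDerivAt_solitonRHS hn hk hR ha hr₀ hψ hpos
  refine antitoneOn_of_hasDerivWithinAt_nonpos (convex_Ioc a r₀)
    (fun r hr => (hψ r hr).continuousAt.continuousWithinAt)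
    (fun r hr => (hψ r (interior_subset hr)).hasDerivWithinAt) fun r hr => ?_
  rw [interior_Ioc] at hr
  exact (solitonRHS_neg hn hk hR hr₀ ⟨ha.trans_lt hr.1, hr.2.le⟩ hpos
    (hge r (Ioo_subset_Ioc_self hr))).le

theorem neg_one_lt_of_hasDerivAt_solitonRHS (hn : 2 ≤ n) (hk : 0 < k) (hR : R ≤ 1)
    (ha : -1 ≤ a) (har₀ : a < r₀) (hr₀ : r₀ < R)
    (hψ : ∀ r ∈ Ioc a r₀, HasDerivAt ψ (solitonRHS n k R (ψ r) r) r)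
    (hpos : solitonNullcline n R r₀ < ψ r₀) : -1 < a := by
  have hge := le_apply_of_hasDerivAt_solitonRHS hn hk hR ha hr₀ hψ hpos
  set δ := ((n : ℝ) - 1) * (R - r₀) * (ψ r₀ - solitonNullcline n R r₀)
  have hδ : 0 < δ :=
    mul_pos (mul_pos (sub_pos.2 (Nat.one_lt_cast.2 hn)) (sub_pos.2 hr₀)) (sub_pos.2 hpos)
  have hψpos : ∀ r ∈ Ioc a r₀, 0 < ψ r := fun r hr =>
    (lt_of_le_of_lt (solitonNullcline_nonneg hn hr₀) hpos).trans_le (hge r hr)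
  refine neg_one_lt_of_hasDerivAt_ge_div_one_add (G := fun r => (ψ r)⁻¹) (m := δ / (2 * k))
    (div_pos hδ (by exact_mod_cast Nat.mul_pos two_pos hk)) har₀ ha
    (fun r hr => (hψ r hr).inv (hψpos r hr).ne') (fun r hr => ?_)
    (fun r hr => inv_pos.2 (hψpos r hr))
  have hr' : r ∈ Ioc (-1) r₀ := ⟨ha.trans_lt hr.1, hr.2⟩
  have hden := natCast_mul_one_sub_sq_pos hk ⟨hr'.1, hr.2.trans_lt (hr₀.trans_le hR)⟩
  have hS := solitonRHS_le hn hk hR hr₀ hr' hpos.le (hge r hr)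
  rw [le_div_iff₀ (pow_pos (hψpos r hr) 2)]
  calc δ / (2 * k) / (1 + r) * ψ r ^ 2 = δ * ψ r ^ 2 / (2 * k * (1 + r)) := by
        rw [div_div, div_mul_eq_mul_div]
    _ ≤ δ * (ψ r ^ 2 + 1) / (k * (1 - r ^ 2)) := by
        have h1r : (0 : ℝ) ≤ 1 + r := by linarith [hr'.1]
        apply div_le_div₀ (by positivity) (by nlinarith) hden
        nlinarith [mul_nonneg (mul_nonneg (Nat.cast_nonneg k) h1r) h1r]
    _ ≤ -solitonRHS n k R (ψ r) r := by
        rw [mul_comm δ, mul_div_right_comm]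
        linarith

end Solution

theorem stmt_10 (n k : ℕ) (hn : 2 ≤ n) (hk : 1 ≤ k) (R a b : ℝ)
    (hR : R ∈ Set.Ioo (-1 : ℝ) 1) (hab : Set.Ioo a b ⊆ Set.Ioo (-1 : ℝ) 1)
    (ψ : ℝ → ℝ) (hψ : ∀ r ∈ Set.Ioo a b, HasDerivAt ψ (solitonRHS n k R (ψ r) r) r)
    (hmax : ¬ ∃ (a' : ℝ) (φ : ℝ → ℝ), a' < a ∧ -1 ≤ a' ∧ Set.EqOn φ ψ (Set.Ioo a b) ∧
      ∀ r ∈ Set.Ioo a' b, HasDerivAt φ (solitonRHS n k R (φ r) r) r)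
    (r₀ : ℝ) (hr₀ab : r₀ ∈ Set.Ioo a b) (hr₀R : r₀ ∈ Set.Ioo (-1 : ℝ) R)
    (hpos : -Real.sqrt (1 - r₀ ^ 2) / (((n : ℝ) - 1) * (r₀ - R)) < ψ r₀) :
    ∃ r₁ ∈ Set.Ioo (-1 : ℝ) r₀,
      Filter.Tendsto ψ (nhdsWithin r₁ (Set.Ioi r₁)) Filter.atTop := by
  obtain ⟨har₀, hr₀b⟩ := hr₀ab
  have ha : -1 ≤ a := by
    by_contra! h
    linarith [(hab ⟨(by linarith : a < (a - 1) / 2), (by linarith [hr₀R.1] : (a - 1) / 2 < b)⟩).1]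
  have hψ' : ∀ r ∈ Ioc a r₀, HasDerivAt ψ (solitonRHS n k R (ψ r) r) r :=
    fun r hr => hψ r ⟨hr.1, hr.2.trans_lt hr₀b⟩
  have ha' : -1 < a :=
    neg_one_lt_of_hasDerivAt_solitonRHS hn hk hR.2.le ha har₀ hr₀R.2 hψ' hpos
  by_cases hbdd : BddAbove (ψ '' Ioc a r₀)
  · obtain ⟨M, hM⟩ := hbdd
    have hw : -1 < (a - 1) / 2 := by linarith
    obtain ⟨K, hK⟩ := exists_lipschitzOnWith_solitonRHS (n := n) (R := R) hk hw
      (hr₀R.2.trans hR.2) (ψ r₀ - 1) (M + 1)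
    obtain ⟨a', ha', φ, hφψ, hφ⟩ := exists_extension_left (f := fun t y => solitonRHS n k R y t)
      (by linarith : (a - 1) / 2 < a) ⟨har₀, hr₀b⟩
      ((contDiffOn_solitonRHS (m := 0) hk).continuousOn.mono
        (prod_mono (Icc_subset_Ioo hw (hr₀R.2.trans hR.2)) (subset_univ _))) hK hψ
      fun r hr => ⟨le_apply_of_hasDerivAt_solitonRHS hn hk hR.2.le ha hr₀R.2 hψ' hpos r hr,
        hM (mem_image_of_mem ψ hr)⟩
    exact (hmax ⟨a', φ, ha'.2, by linarith [ha'.1], hφψ, hφ⟩).elim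
  · exact ⟨a, ⟨ha', har₀⟩,
      (antitoneOn_of_hasDerivAt_solitonRHS hn hk hR.2.le ha hr₀R.2 hψ' hpos).tendsto_nhdsGT_atTop
        hbdd⟩
end

section
/- Let n ≥ 2, k ≥ 1, R ∈ (-1,1), and suppose ψ solves ψ'(r) = (1/(k(1-r²)))·(ψ(r)²+1)·((n-1)(r-R)·ψ(r) + √(1-r²)) on (-1, b) for some b and extends continuously to r = -1. Then ψ(-1) = 0. Moreover, if V'(r) = ψ(r)/(k√(1-r²)) extends continuously to r = -1, then V'(-1) = 1/(k(k + (n-1)(1+R))). -/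
open Real Set Filter

/-!
Near the focal point the equation gives `(1 + r) ψ'(r) → (c² + 1)(n-1)(-1-R) c / 2k`, where
`c = ψ(-1)`. A nonzero limit `A` of `(r - a) f'(r)` at `a⁺` makes `f` grow like `A log (r - a)`,
so `f` cannot have a limit at `a⁺`; hence `c = 0`. Then `ψ` and `k √(1 - r²)` both vanish at
`-1`, and l'Hôpital's rule expresses the limit `L` of their quotient through `L` itself:
`L = ((n-1)(-1-R) k L + 1) / k²`, whose only solution is `1 / (k (k + (n-1)(1+R)))`.
-/

open Topology

theorem tendsto_log_sub_nhdsGT_atBot (a : ℝ) :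
    Tendsto (fun r => log (r - a)) (𝓝[>] a) atBot := by
  refine tendsto_log_nhdsGT_zero.comp (tendsto_nhdsWithin_iff.2 ⟨?_, ?_⟩)
  · simpa using (tendsto_id.sub_const a).mono_left (nhdsWithin_le_nhds (a := a) (s := Ioi a))
  · filter_upwards [self_mem_nhdsWithin] with r (hr : a < r)
    exact sub_pos.2 hr

theorem nonpos_of_tendsto_sub_mul_deriv {f f' : ℝ → ℝ} {a c A : ℝ}
    (hderiv : ∀ᶠ r in 𝓝[>] a, HasDerivAt f (f' r) r) (hf : Tendsto f (𝓝[>] a) (𝓝 c))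
    (hA : Tendsto (fun r => (r - a) * f' r) (𝓝[>] a) (𝓝 A)) : A ≤ 0 := by
  by_contra! hApos
  obtain ⟨δ, hδ : a < δ, hsub⟩ := mem_nhdsGT_iff_exists_Ioo_subset.1
    (hderiv.and (hA.eventually (eventually_gt_nhds (half_lt_self hApos))))
  -- `h` is nondecreasing on `(a, δ)`, yet tends to `+∞` at `a⁺`.
  set h : ℝ → ℝ := fun r => f r - A / 2 * log (r - a)
  have hderiv_h : ∀ r ∈ Ioo a δ, HasDerivAt h (f' r - A / 2 * (r - a)⁻¹) r := fun r hr =>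
    (hsub hr).1.sub <| (((hasDerivAt_id r).sub_const a).log (sub_pos.2 hr.1).ne').const_mul _
      |>.congr_deriv (by simp)
  have hmono : MonotoneOn h (Ioo a δ) := by
    refine monotoneOn_of_hasDerivWithinAt_nonneg (convex_Ioo a δ)
      (fun r hr => (hderiv_h r hr).continuousAt.continuousWithinAt)
      (fun r hr => (hderiv_h r (interior_subset hr)).hasDerivWithinAt) fun r hr => ?_
    rw [interior_Ioo] at hr
    have hra : 0 < r - a := sub_pos.2 hr.1
    have := (hsub hr).2
    rw [sub_nonneg, ← div_eq_mul_inv, div_le_iff₀ hra]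
    linarith
  have hmid : (a + δ) / 2 ∈ Ioo a δ := ⟨by linarith, by linarith⟩
  have hle : ∀ᶠ r in 𝓝[>] a, h r ≤ h ((a + δ) / 2) := by
    filter_upwards [Ioo_mem_nhdsGT hmid.1] with r hr
    exact hmono ⟨hr.1, hr.2.trans hmid.2⟩ hmid hr.2.le
  have htop : Tendsto h (𝓝[>] a) atTop := by
    have hlog := tendsto_neg_atBot_atTop.comp
      ((tendsto_log_sub_nhdsGT_atBot a).const_mul_atBot (half_pos hApos))
    exact (hf.add_atTop hlog).congr fun r => (sub_eq_add_neg _ _).symm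
  obtain ⟨r, hr, hr'⟩ := (hle.and (htop.eventually_gt_atTop (h ((a + δ) / 2)))).exists
  exact hr.not_gt hr'

theorem eq_zero_of_tendsto_sub_mul_deriv {f f' : ℝ → ℝ} {a c A : ℝ}
    (hderiv : ∀ᶠ r in 𝓝[>] a, HasDerivAt f (f' r) r) (hf : Tendsto f (𝓝[>] a) (𝓝 c))
    (hA : Tendsto (fun r => (r - a) * f' r) (𝓝[>] a) (𝓝 A)) : A = 0 := by
  refine le_antisymm (nonpos_of_tendsto_sub_mul_deriv hderiv hf hA) ?_
  have := nonpos_of_tendsto_sub_mul_deriv (f' := -f') (A := -A) (hderiv.mono fun r h => h.neg)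
    hf.neg (hA.neg.congr fun r => (mul_neg _ _).symm)
  linarith

section Soliton

variable {n k : ℕ} {R : ℝ}

theorem tendsto_sub_mul_solitonRHS (hk : k ≠ 0) {y : ℝ → ℝ} {c : ℝ}
    (hy : Tendsto y (𝓝[>] (-1)) (𝓝 c)) :
    Tendsto (fun r => (r - -1) * solitonRHS n k R (y r) r) (𝓝[>] (-1))
      (𝓝 ((c ^ 2 + 1) * ((n - 1) * (-1 - R) * c) / (k * 2))) := by
  have hr : Tendsto (fun r : ℝ => r) (𝓝[>] (-1)) (𝓝 (-1)) :=
    tendsto_nhdsWithin_of_tendsto_nhds tendsto_id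
  have hsqrt : Tendsto (fun r : ℝ => √(1 - r ^ 2)) (𝓝[>] (-1)) (𝓝 0) := by
    refine tendsto_nhdsWithin_of_tendsto_nhds ?_
    exact (by fun_prop : Continuous fun r : ℝ => √(1 - r ^ 2)).tendsto' _ _ (by norm_num)
  have hlim : Tendsto (fun r => (y r ^ 2 + 1) * ((n - 1) * (r - R) * y r + √(1 - r ^ 2)) /
      (k * (1 - r))) (𝓝[>] (-1))
      (𝓝 ((c ^ 2 + 1) * ((n - 1) * (-1 - R) * c + 0) / (k * (1 - -1)))) :=
    (((hy.pow 2).add_const 1).mul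
      (((tendsto_const_nhds.mul (hr.sub_const R)).mul hy).add hsqrt)).div
      (tendsto_const_nhds.mul (tendsto_const_nhds.sub hr)) (by norm_num [hk])
  refine (hlim.congr' ?_).trans (by norm_num)
  filter_upwards [Ioo_mem_nhdsGT (by norm_num : (-1 : ℝ) < 1)] with r hr
  have h1 : 1 - r ≠ 0 := by linarith [hr.2]
  have h2 : 1 - r ^ 2 ≠ 0 := by nlinarith [hr.1, hr.2]
  unfold solitonRHS
  field_simp
  ring

theorem eq_zero_of_hasDerivAt_solitonRHS (hn : n ≠ 1) (hk : k ≠ 0) (hR : R ≠ -1) {b : ℝ}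
    (hb : -1 < b) {ψ : ℝ → ℝ}
    (hψ : ∀ r ∈ Ioo (-1 : ℝ) b, HasDerivAt ψ (solitonRHS n k R (ψ r) r) r)
    (hcont : ContinuousWithinAt ψ (Ioi (-1 : ℝ)) (-1)) :
    ψ (-1) = 0 := by
  have hderiv : ∀ᶠ r in 𝓝[>] (-1 : ℝ), HasDerivAt ψ (solitonRHS n k R (ψ r) r) r := by
    filter_upwards [Ioo_mem_nhdsGT hb] using hψ
  have hzero :=
    eq_zero_of_tendsto_sub_mul_deriv hderiv hcont (tendsto_sub_mul_solitonRHS hk hcont)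
  have hn' : (n : ℝ) - 1 ≠ 0 := sub_ne_zero.2 (by exact_mod_cast hn)
  have hR' : -1 - R ≠ 0 := by contrapose! hR; linarith
  simpa [hk, hn', hR', (by positivity : ψ (-1) ^ 2 + 1 ≠ 0)] using hzero

theorem solitonRHS_div_eq (hk : k ≠ 0) {y r : ℝ} (hr : r ^ 2 < 1) (hr0 : r ≠ 0) :
    solitonRHS n k R y r / (k * (-r / √(1 - r ^ 2))) =
      (y ^ 2 + 1) * ((n - 1) * (r - R) * (y / √(1 - r ^ 2)) + 1) / (k ^ 2 * -r) := by
  have hs : 0 < √(1 - r ^ 2) := sqrt_pos.2 (sub_pos.2 hr)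
  have hs2 : √(1 - r ^ 2) ^ 2 = 1 - r ^ 2 := sq_sqrt (sub_pos.2 hr).le
  unfold solitonRHS
  set s := √(1 - r ^ 2)
  rw [← hs2]
  field_simp

theorem eq_of_tendsto_div_sqrt_of_hasDerivAt_solitonRHS (hk : k ≠ 0) {b : ℝ}
    (hb : -1 < b) {ψ : ℝ → ℝ}
    (hψ : ∀ r ∈ Ioo (-1 : ℝ) b, HasDerivAt ψ (solitonRHS n k R (ψ r) r) r)
    (hψ0 : Tendsto ψ (𝓝[>] (-1)) (𝓝 0)) {L : ℝ}
    (hL : Tendsto (fun r => ψ r / (k * √(1 - r ^ 2))) (𝓝[>] (-1)) (𝓝 L)) :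
    L = 1 / (k * (k + (n - 1) * (1 + R))) := by
  have hk' : (k : ℝ) ≠ 0 := by exact_mod_cast hk
  have hr : Tendsto (fun r : ℝ => r) (𝓝[>] (-1)) (𝓝 (-1)) :=
    tendsto_nhdsWithin_of_tendsto_nhds tendsto_id
  have hnear_b : ∀ᶠ r in 𝓝[>] (-1 : ℝ), r ∈ Ioo (-1) b := Ioo_mem_nhdsGT hb
  have hnear_0 : ∀ᶠ r in 𝓝[>] (-1 : ℝ), r ∈ Ioo (-1) 0 := Ioo_mem_nhdsGT (by norm_num)
  have hψs : Tendsto (fun r => ψ r / √(1 - r ^ 2)) (𝓝[>] (-1)) (𝓝 (k * L)) :=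
    (hL.const_mul (k : ℝ)).congr fun r =>
      (mul_div_assoc' _ _ _).trans (mul_div_mul_left _ _ hk')
  have hquot : Tendsto (fun r => solitonRHS n k R (ψ r) r / (k * (-r / √(1 - r ^ 2))))
      (𝓝[>] (-1))
      (𝓝 ((0 ^ 2 + 1) * ((n - 1) * (-1 - R) * (k * L) + 1) / (k ^ 2 * -(-1)))) := by
    refine ((((hψ0.pow 2).add_const 1).mul
      (((tendsto_const_nhds.mul (hr.sub_const R)).mul hψs).add_const 1)).div
      (tendsto_const_nhds.mul hr.neg) (by simp [hk'])).congr' ?_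
    filter_upwards [hnear_0] with r hr
    exact (solitonRHS_div_eq hk (by nlinarith [hr.1, hr.2]) hr.2.ne).symm
  have hlhop := HasDerivAt.lhopital_zero_nhdsGT (f := ψ) (g := fun r => k * √(1 - r ^ 2))
    (hnear_b.mono hψ) ?_ ?_ hψ0 ?_ hquot
  · have hLeq := tendsto_nhds_unique hL hlhop
    refine eq_one_div_of_mul_eq_one_right ?_
    field_simp at hLeq
    linear_combination hLeq
  · filter_upwards [hnear_0] with r hr
    have hpos : 0 < 1 - r ^ 2 := by nlinarith [hr.1, hr.2]
    exact ((((hasDerivAt_pow 2 r).const_sub 1).sqrt hpos.ne').const_mul (k : ℝ)).congr_deriv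
      (by field_simp; ring)
  · filter_upwards [hnear_0] with r hr
    have hpos : 0 < 1 - r ^ 2 := by nlinarith [hr.1, hr.2]
    exact mul_ne_zero hk' (div_ne_zero (neg_ne_zero.2 hr.2.ne) (sqrt_pos.2 hpos).ne')
  · refine tendsto_nhdsWithin_of_tendsto_nhds ?_
    exact (by fun_prop : Continuous fun r : ℝ => (k : ℝ) * √(1 - r ^ 2)).tendsto' _ _
      (by norm_num)

end Soliton

theorem stmt_11_general (n k : ℕ) (hn : 2 ≤ n) (hk : 1 ≤ k) (R b : ℝ)
    (hR : R ∈ Set.Ioo (-1 : ℝ) 1) (hb' : -1 < b)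
    (ψ : ℝ → ℝ) (hψ : ∀ r ∈ Set.Ioo (-1 : ℝ) b, HasDerivAt ψ (solitonRHS n k R (ψ r) r) r)
    (hcont : ContinuousWithinAt ψ (Set.Ioi (-1 : ℝ)) (-1)) :
    ψ (-1) = 0 ∧
    ∀ L : ℝ, Filter.Tendsto (fun r => ψ r / ((k : ℝ) * Real.sqrt (1 - r ^ 2)))
        (nhdsWithin (-1) (Set.Ioi (-1 : ℝ))) (nhds L) →
      L = 1 / ((k : ℝ) * ((k : ℝ) + ((n : ℝ) - 1) * (1 + R))) := by
  have hk0 : k ≠ 0 := Nat.one_le_iff_ne_zero.1 hk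
  have hψ0 : ψ (-1) = 0 :=
    eq_zero_of_hasDerivAt_solitonRHS (by omega) hk0 hR.1.ne' hb' hψ hcont
  refine ⟨hψ0, fun L hL => eq_of_tendsto_div_sqrt_of_hasDerivAt_solitonRHS hk0 hb' hψ ?_ hL⟩
  rw [← hψ0]
  exact hcont

theorem stmt_11 (n k : ℕ) (hn : 2 ≤ n) (hk : 1 ≤ k) (R b : ℝ)
    (hR : R ∈ Set.Ioo (-1 : ℝ) 1) (hb : b ≤ 1) (hb' : -1 < b)
    (ψ : ℝ → ℝ) (hψ : ∀ r ∈ Set.Ioo (-1 : ℝ) b, HasDerivAt ψ (solitonRHS n k R (ψ r) r) r)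
    (hcont : ContinuousWithinAt ψ (Set.Ioi (-1 : ℝ)) (-1)) :
    ψ (-1) = 0 ∧
    ∀ L : ℝ, Filter.Tendsto (fun r => ψ r / ((k : ℝ) * Real.sqrt (1 - r ^ 2)))
        (nhdsWithin (-1) (Set.Ioi (-1 : ℝ))) (nhds L) →
      L = 1 / ((k : ℝ) * ((k : ℝ) + ((n : ℝ) - 1) * (1 + R))) :=
  stmt_11_general n k hn hk R b hR hb' ψ hψ hcont
end
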